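/- arXiv:math/0503330 — 2 statements merged into one kernel-verified Lean document; each statement's English description precedes it below -/
import Mathlib

section
/- Every connected vertex-transitive finite simple graph with an even number of vertices has a perfect matching. -/
/-!
Encode matchings as involutions of the vertex set, the unmatched vertices being the fixed points.
Among all maximum matchings `σ` and pairs `u ≠ v` of vertices they leave unmatched, take one with
`d = dist u v` minimal. Then `d ≥ 2`, since otherwise `σ` could be enlarged by the edge `uv`; let
`w` be the neighbour of `u` on a geodesic to `v`. An automorphism sending `u` to `w` transports
`σ` to a maximum matching `τ` leaving `w` unmatched. Let `S` be the cycle of `w` under `σ ∘ τ`,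
which is invariant under `σ` and `τ`. Using `τ` on `S` and `σ` off `S` gives a matching, and so
does the opposite choice; together they leave as many vertices unmatched as `σ` and `τ` do, so
both are maximum. The first leaves `w` unmatched, and also `u` or `v`, whichever lies outside `S`:
a closer pair. But `u` and `v` cannot both lie in `S`, because `σ` fixes at most one point of the
cycle through the fixed point `w` of `τ`. So a maximum matching leaves at most one vertex
unmatched, and by parity none.
-/

open Function Set

namespace Equiv.Perm

variable {α : Type*} {f g : Perm α} {x : α}

theorem apply_zpow_mul_apply_of_involutive (hf : Involutive f) (hg : Involutive g)
    (hgx : g x = x) (n : ℤ) :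
    g (((f * g) ^ n) x) = ((f * g) ^ (-n)) x ∧ f (((f * g) ^ n) x) = ((f * g) ^ (1 - n)) x := by
  have hff : f * f = 1 := Equiv.ext hf
  have hgg : g * g = 1 := Equiv.ext hg
  have hsemiconj : SemiconjBy g (f * g) (f * g)⁻¹ := by
    rw [SemiconjBy, mul_inv_rev, inv_eq_of_mul_eq_one_right hgg,
      inv_eq_of_mul_eq_one_right hff, mul_assoc]
  have hg_zpow : g (((f * g) ^ n) x) = ((f * g) ^ (-n)) x := by
    rw [← Perm.mul_apply, hsemiconj.zpow_right n, Perm.mul_apply, hgx, inv_zpow']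
  refine ⟨hg_zpow, ?_⟩
  calc f (((f * g) ^ n) x) = (f * g) (g (((f * g) ^ n) x)) := by
        rw [← Perm.mul_apply (f * g), mul_assoc, hgg, mul_one]
    _ = ((f * g) ^ (1 - n)) x := by
        rw [hg_zpow, ← Perm.mul_apply, ← zpow_one_add, sub_eq_add_neg]

theorem mapsTo_sameCycle_mul_right (hf : Involutive f) (hg : Involutive g) (hgx : g x = x) :
    MapsTo g {y | (f * g).SameCycle x y} {y | (f * g).SameCycle x y} := by
  rintro _ ⟨n, rfl⟩
  exact ⟨-n, ((apply_zpow_mul_apply_of_involutive hf hg hgx n).1).symm⟩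

theorem mapsTo_sameCycle_mul_left (hf : Involutive f) (hg : Involutive g) (hgx : g x = x) :
    MapsTo f {y | (f * g).SameCycle x y} {y | (f * g).SameCycle x y} := by
  rintro _ ⟨n, rfl⟩
  exact ⟨1 - n, ((apply_zpow_mul_apply_of_involutive hf hg hgx n).2).symm⟩

theorem eq_of_sameCycle_mul_of_apply_eq_self (hf : Involutive f) (hg : Involutive g)
    (hgx : g x = x) {u v : α} (hu : (f * g).SameCycle x u) (hv : (f * g).SameCycle x v)
    (hfu : f u = u) (hfv : f v = v) : u = v := by
  set r := f * g
  have hstab : ∀ {y}, r.SameCycle x y → f y = y → ∃ i : ℤ, (r ^ i) x = y ∧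
      r ^ (1 - 2 * i) ∈ MulAction.stabilizer (Perm α) x := by
    rintro _ ⟨i, rfl⟩ hfy
    refine ⟨i, rfl, ?_⟩
    rw [MulAction.mem_stabilizer_iff, Perm.smul_def,
      show 1 - 2 * i = -i + (1 - i) by ring, zpow_add, Perm.mul_apply,
      ← (apply_zpow_mul_apply_of_involutive hf hg hgx i).2, hfy, ← Perm.mul_apply,
      ← zpow_add, neg_add_cancel, zpow_zero, Perm.one_apply]
  obtain ⟨i, rfl, hi⟩ := hstab hu hfu
  obtain ⟨j, rfl, hj⟩ := hstab hv hfv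
  -- `1 - 2 i` is odd, so together with `2 (i - j)` it generates `i - j`
  have hij : r ^ (i - j) ∈ MulAction.stabilizer (Perm α) x := by
    have : r ^ (i - j) =
        (r ^ (1 - 2 * i)) ^ (i - j) * (r ^ (1 - 2 * j) * (r ^ (1 - 2 * i))⁻¹) ^ i := by
      rw [← zpow_neg, ← zpow_add, ← zpow_mul, ← zpow_mul, ← zpow_add]
      congr 1
      ring
    rw [this]
    exact mul_mem (zpow_mem hi _) (zpow_mem (mul_mem hj (inv_mem hi)) _)
  rw [MulAction.mem_stabilizer_iff, Perm.smul_def] at hij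
  calc (r ^ i) x = (r ^ j) ((r ^ (i - j)) x) := by
        rw [← Perm.mul_apply, ← zpow_add, add_sub_cancel]
    _ = (r ^ j) x := by rw [hij]

end Equiv.Perm

theorem Function.Involutive.ncard_fixedPoints_modEq {α : Type*} [Finite α] {f : α → α}
    (hf : Involutive f) : (fixedPoints f).ncard ≡ Nat.card α [MOD 2] := by
  classical
  have := Fintype.ofFinite α
  have hsq : (show Function.End α from f) ^ (2 ^ 1) = 1 := funext hf
  rw [← Nat.card_coe_set_eq, Nat.card_eq_fintype_card, Nat.card_eq_fintype_card]
  exact (Equiv.Perm.card_fixedPoints_modEq (p := 2) hsq).symm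

theorem Function.Involutive.piecewise {α : Type*} {f g : α → α} {s : Set α}
    [∀ x, Decidable (x ∈ s)]
    (hf : Involutive f) (hg : Involutive g) (hfs : MapsTo f s s) (hgs : MapsTo g s s) :
    Involutive (s.piecewise f g) := by
  intro x
  by_cases hx : x ∈ s
  · rw [piecewise_eq_of_mem _ _ _ hx, piecewise_eq_of_mem _ _ _ (hfs hx), hf]
  · have hgx : g x ∉ s := fun h => hx (hg x ▸ hgs h)
    rw [piecewise_eq_of_notMem _ _ _ hx, piecewise_eq_of_notMem _ _ _ hgx, hg]

theorem Function.fixedPoints_piecewise {α : Type*} (f g : α → α) (s : Set α)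
    [∀ x, Decidable (x ∈ s)] :
    fixedPoints (s.piecewise f g) = (fixedPoints f ∩ s) ∪ (fixedPoints g \ s) := by
  ext x
  by_cases hx : x ∈ s <;> simp [hx, IsFixedPt]

theorem Function.ncard_fixedPoints_piecewise_add {α : Type*} [Finite α] (f g : α → α)
    (s : Set α) [∀ x, Decidable (x ∈ s)] :
    (fixedPoints (s.piecewise f g)).ncard + (fixedPoints (s.piecewise g f)).ncard =
      (fixedPoints f).ncard + (fixedPoints g).ncard := by
  rw [fixedPoints_piecewise, fixedPoints_piecewise,
    ncard_union_eq (disjoint_sdiff_right.mono_left inter_subset_right),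
    ncard_union_eq (disjoint_sdiff_right.mono_left inter_subset_right),
    ← ncard_inter_add_ncard_sdiff_eq_ncard (fixedPoints f) s,
    ← ncard_inter_add_ncard_sdiff_eq_ncard (fixedPoints g) s]
  ring

theorem Equiv.ncard_fixedPoints_conj {α : Type*} (φ : α ≃ α) (f : α → α) :
    (fixedPoints (φ ∘ f ∘ φ.symm)).ncard = (fixedPoints f).ncard := by
  have := (bijOn_fixedPoints_comp (f ∘ φ.symm) φ)
  rw [comp_assoc, φ.symm_comp_self, comp_id] at this
  exact this.ncard_eq.symm

namespace SimpleGraph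

variable {V : Type*} {G : SimpleGraph V} {σ τ : V → V} {u v : V}

theorem Reachable.exists_adj_dist_lt (h : G.Reachable u v) (huv : u ≠ v) :
    ∃ w, G.Adj u w ∧ G.dist w v < G.dist u v := by
  obtain ⟨p, hp⟩ := h.exists_walk_length_eq_dist
  cases p with
  | nil => exact absurd rfl huv
  | cons hadj q =>
    refine ⟨_, hadj, ?_⟩
    rw [← hp, Walk.length_cons]
    exact Nat.lt_succ_of_le (dist_le q)

structure IsMatchingInvolution (G : SimpleGraph V) (σ : V → V) : Prop where
  involutive : Involutive σ
  adj : ∀ ⦃x⦄, σ x ≠ x → G.Adj x (σ x)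

structure IsMaximumMatchingInvolution (G : SimpleGraph V) (σ : V → V) : Prop extends
    G.IsMatchingInvolution σ where
  ncard_fixedPoints_le :
    ∀ τ, G.IsMatchingInvolution τ → (fixedPoints σ).ncard ≤ (fixedPoints τ).ncard

theorem exists_isMaximumMatchingInvolution [Finite V] :
    ∃ σ, G.IsMaximumMatchingInvolution σ := by
  obtain ⟨σ, hσ, hmin⟩ := Set.exists_min_image {σ | G.IsMatchingInvolution σ}
    (fun σ => (fixedPoints σ).ncard) (Set.toFinite _)
    ⟨id, fun _ => rfl, fun _ h => absurd rfl h⟩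
  exact ⟨σ, hσ, hmin⟩

theorem IsMatchingInvolution.exists_isPerfectMatching (hσ : G.IsMatchingInvolution σ)
    (hfree : fixedPoints σ = ∅) : ∃ M : G.Subgraph, M.IsPerfectMatching := by
  have hne : ∀ x, σ x ≠ x := fun x hx => (Set.eq_empty_iff_forall_notMem.mp hfree) x hx
  let M : G.Subgraph :=
    { verts := univ
      Adj x y := σ x = y
      adj_sub := by rintro x _ rfl; exact hσ.adj (hne x)
      edge_vert := fun _ => mem_univ _
      symm := ⟨fun x y h => by rw [← h, hσ.involutive]⟩ }
  exact ⟨M, Subgraph.isPerfectMatching_iff.mpr fun x => ⟨σ x, rfl, fun _ h => Eq.symm h⟩⟩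

theorem IsMatchingInvolution.conj (hσ : G.IsMatchingInvolution σ) (φ : G ≃g G) :
    G.IsMatchingInvolution (φ ∘ σ ∘ φ.symm) where
  involutive x := by simp [hσ.involutive _]
  adj x hx := by
    have hne : σ (φ.symm x) ≠ φ.symm x := fun h => hx (by simp [h])
    simpa using φ.map_adj_iff.mpr (hσ.adj hne)

theorem IsMaximumMatchingInvolution.conj (hσ : G.IsMaximumMatchingInvolution σ) (φ : G ≃g G) :
    G.IsMaximumMatchingInvolution (φ ∘ σ ∘ φ.symm) where
  toIsMatchingInvolution := hσ.toIsMatchingInvolution.conj φ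
  ncard_fixedPoints_le τ hτ :=
    (Equiv.ncard_fixedPoints_conj φ.toEquiv σ).trans_le (hσ.ncard_fixedPoints_le τ hτ)

theorem IsMatchingInvolution.piecewise (hσ : G.IsMatchingInvolution σ)
    (hτ : G.IsMatchingInvolution τ) {s : Set V} [∀ x, Decidable (x ∈ s)]
    (hσs : MapsTo σ s s) (hτs : MapsTo τ s s) : G.IsMatchingInvolution (s.piecewise σ τ) where
  involutive := hσ.involutive.piecewise hτ.involutive hσs hτs
  adj x hx := by
    by_cases hxs : x ∈ s
    · rw [piecewise_eq_of_mem _ _ _ hxs] at hx ⊢; exact hσ.adj hx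
    · rw [piecewise_eq_of_notMem _ _ _ hxs] at hx ⊢; exact hτ.adj hx

theorem IsMaximumMatchingInvolution.piecewise [Finite V] (hσ : G.IsMaximumMatchingInvolution σ)
    (hτ : G.IsMaximumMatchingInvolution τ) {s : Set V} [∀ x, Decidable (x ∈ s)]
    (hσs : MapsTo σ s s) (hτs : MapsTo τ s s) :
    G.IsMaximumMatchingInvolution (s.piecewise σ τ) where
  toIsMatchingInvolution :=
    hσ.toIsMatchingInvolution.piecewise hτ.toIsMatchingInvolution hσs hτs
  ncard_fixedPoints_le ρ hρ := by
    have hsum := ncard_fixedPoints_piecewise_add σ τ s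
    have hτ' := hτ.ncard_fixedPoints_le _ (hτ.toIsMatchingInvolution.piecewise
      hσ.toIsMatchingInvolution hτs hσs)
    have hσρ := hσ.ncard_fixedPoints_le ρ hρ
    omega

theorem IsMaximumMatchingInvolution.not_adj (hσ : G.IsMaximumMatchingInvolution σ) [Finite V]
    (hu : σ u = u) (hv : σ v = v) : ¬ G.Adj u v := by
  classical
  intro huv
  have hcomm : ∀ z, Equiv.swap u v (σ z) = σ (Equiv.swap u v z) := by
    intro z
    by_cases hzu : z = u
    · subst hzu; simp [hu, hv]
    by_cases hzv : z = v
    · subst hzv; simp [hu, hv]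
    have hσzu : σ z ≠ u := fun h => hzu (by rw [← hσ.involutive z, h, hu])
    have hσzv : σ z ≠ v := fun h => hzv (by rw [← hσ.involutive z, h, hv])
    rw [Equiv.swap_apply_of_ne_of_ne hzu hzv, Equiv.swap_apply_of_ne_of_ne hσzu hσzv]
  have hτ : G.IsMatchingInvolution (Equiv.swap u v ∘ σ) := by
    refine ⟨fun x => ?_, fun x hx => ?_⟩
    · simp only [comp_apply, hcomm, Equiv.swap_apply_self, hσ.involutive x]
    by_cases hxu : x = u
    · subst hxu; simpa [hu] using huv
    by_cases hxv : x = v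
    · subst hxv; simpa [hv] using huv.symm
    rw [comp_apply, hcomm, Equiv.swap_apply_of_ne_of_ne hxu hxv] at hx ⊢
    exact hσ.adj hx
  have hfix : fixedPoints (Equiv.swap u v ∘ σ) ⊆ fixedPoints σ \ {u} := by
    intro x hx
    have hx' : Equiv.swap u v (σ x) = x := hx
    by_cases hxu : x = u
    · subst hxu; simp [hu, huv.ne.symm] at hx'
    by_cases hxv : x = v
    · subst hxv; simp [hv, huv.ne] at hx'
    rw [hcomm, Equiv.swap_apply_of_ne_of_ne hxu hxv] at hx'
    exact ⟨hx', hxu⟩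
  have hmax := hσ.ncard_fixedPoints_le _ hτ
  have hle := ncard_le_ncard hfix
  rw [ncard_sdiff_singleton_of_mem (show u ∈ fixedPoints σ from hu)] at hle
  have hpos : 0 < (fixedPoints σ).ncard := (ncard_pos (toFinite _)).mpr ⟨u, hu⟩
  omega

theorem IsMaximumMatchingInvolution.exists_dist_lt [Finite V] (hconn : G.Connected)
    (htrans : ∀ u v : V, ∃ φ : G ≃g G, φ u = v) (hσ : G.IsMaximumMatchingInvolution σ)
    (hu : σ u = u) (hv : σ v = v) (huv : u ≠ v) :
    ∃ τ u' v', G.IsMaximumMatchingInvolution τ ∧ τ u' = u' ∧ τ v' = v' ∧ u' ≠ v' ∧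
      G.dist u' v' < G.dist u v := by
  classical
  have hnadj : ¬ G.Adj u v := hσ.not_adj hu hv
  obtain ⟨w, huw, hwv⟩ := (hconn.preconnected u v).exists_adj_dist_lt huv
  obtain ⟨φ, rfl⟩ := htrans u w
  have hτ := hσ.conj φ
  have hτw : (φ ∘ σ ∘ φ.symm) (φ u) = φ u := by simp [hu]
  set τ := φ ∘ σ ∘ φ.symm
  set f := hσ.involutive.toPerm σ
  set g := hτ.involutive.toPerm τ
  set s := {y | (f * g).SameCycle (φ u) y}
  have hρ := hτ.piecewise hσ (s := s)
    (Equiv.Perm.mapsTo_sameCycle_mul_right hσ.involutive hτ.involutive hτw)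
    (Equiv.Perm.mapsTo_sameCycle_mul_left hσ.involutive hτ.involutive hτw)
  have hρw : s.piecewise τ σ (φ u) = φ u := by
    rw [piecewise_eq_of_mem _ _ _ (show φ u ∈ s from Equiv.Perm.SameCycle.refl _ _), hτw]
  by_cases hus : u ∈ s
  · by_cases hvs : v ∈ s
    · exact absurd (Equiv.Perm.eq_of_sameCycle_mul_of_apply_eq_self hσ.involutive hτ.involutive
        hτw hus hvs hu hv) huv
    · exact ⟨_, φ u, v, hρ, hρw, by rw [piecewise_eq_of_notMem _ _ _ hvs, hv],
        fun h => hnadj (h ▸ huw), hwv⟩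
  · refine ⟨_, u, φ u, hρ, by rw [piecewise_eq_of_notMem _ _ _ hus, hu], hρw, huw.ne, ?_⟩
    rw [dist_eq_one_iff_adj.mpr huw]
    exact hconn.one_lt_dist_of_ne_of_not_adj huv hnadj

theorem IsMaximumMatchingInvolution.ncard_fixedPoints_le_one [Finite V] (hconn : G.Connected)
    (htrans : ∀ u v : V, ∃ φ : G ≃g G, φ u = v) (hσ : G.IsMaximumMatchingInvolution σ) :
    (fixedPoints σ).ncard ≤ 1 := by
  suffices ∀ n σ u v, G.IsMaximumMatchingInvolution σ → σ u = u → σ v = v → u ≠ v →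
      G.dist u v ≠ n by
    rw [ncard_le_one (toFinite _)]
    by_contra! h
    obtain ⟨u, hu, v, hv, huv⟩ := h
    exact this _ σ u v hσ hu hv huv rfl
  intro n
  induction n using Nat.strong_induction_on with
  | _ n ih =>
    rintro σ u v hσ hu hv huv rfl
    obtain ⟨τ, u', v', hτ, hu', hv', huv', hlt⟩ :=
      hσ.exists_dist_lt hconn htrans hu hv huv
    exact ih _ hlt τ u' v' hτ hu' hv' huv' rfl

end SimpleGraph

/-- Every connected vertex-transitive finite simple graph with an even
number of vertices has a perfect matching. -/
theorem vertexTransitive_connected_even_has_perfectMatching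
    {V : Type*} [Fintype V] (G : SimpleGraph V)
    (hconn : G.Connected)
    (htrans : ∀ u v : V, ∃ φ : G ≃g G, φ u = v)
    (heven : Even (Fintype.card V)) :
    ∃ M : G.Subgraph, M.IsPerfectMatching := by
  obtain ⟨σ, hσ⟩ := G.exists_isMaximumMatchingInvolution
  have hle := hσ.ncard_fixedPoints_le_one hconn htrans
  have hmod := hσ.involutive.ncard_fixedPoints_modEq
  rw [Nat.card_eq_fintype_card] at hmod
  have hzero : (fixedPoints σ).ncard = 0 := by
    rw [Nat.even_iff] at heven
    unfold Nat.ModEq at hmod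
    omega
  exact hσ.exists_isPerfectMatching ((ncard_eq_zero (toFinite _)).mp hzero)
end

section
/- Let k ≥ 3, let X be a finite simple k-regular graph on n vertices whose second largest eigenvalue satisfies λ₁(X) ≤ 2√(k−1), and let F be a perfect matching of X. Then the (k−1)-regular graph X − F obtained by deleting the edges of F satisfies λ₁(X − F) ≤ 1 + 2√(k−1). -/
/-!
Let `A`, `B` be the adjacency matrices of `X` and `X - F`. The perfect matching is the graph of
an involution `σ`, and `A = B + P_σ`; since `xᵀ P_σ x ≥ -‖x‖²`, we get `xᵀ B x ≤ xᵀ A x + ‖x‖²`.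
As `λ₁(X) ≤ 2√(k-1) < k`, the all-ones vector `𝟙` (eigenvalue `k`) is orthogonal to every
eigenvector of `A` whose eigenvalue exceeds `λ₁(X)`, so `xᵀ A x ≤ λ₁(X) ‖x‖²` for `x ⊥ 𝟙`. Finally
the span of the two top eigenvectors of `B` contains some nonzero `x ⊥ 𝟙`, for which
`λ₁(X - F) ‖x‖² ≤ xᵀ B x ≤ (λ₁(X) + 1) ‖x‖²`.
-/

open scoped Classical

open Matrix Finset

namespace Matrix.IsHermitian

variable {n : Type*} [Fintype n] [DecidableEq n] {A : Matrix n n ℝ} (hA : A.IsHermitian)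

noncomputable def eigenCoords (x : n → ℝ) : n → ℝ :=
  (hA.eigenvectorUnitary : Matrix n n ℝ)ᵀ *ᵥ x

lemma eigenvectorUnitary_mul_transpose :
    (hA.eigenvectorUnitary : Matrix n n ℝ) * (hA.eigenvectorUnitary : Matrix n n ℝ)ᵀ = 1 := by
  simpa [star_eq_conjTranspose] using Unitary.coe_mul_star_self hA.eigenvectorUnitary

lemma transpose_mul_eigenvectorUnitary :
    (hA.eigenvectorUnitary : Matrix n n ℝ)ᵀ * (hA.eigenvectorUnitary : Matrix n n ℝ) = 1 := by
  simpa [star_eq_conjTranspose] using Unitary.coe_star_mul_self hA.eigenvectorUnitary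

lemma eigenCoords_mulVec (x : n → ℝ) (i : n) :
    hA.eigenCoords (A *ᵥ x) i = hA.eigenvalues i * hA.eigenCoords x i := by
  have hAt : Aᵀ = A := by simpa using hA.eq
  change (hA.eigenvectorUnitary : Matrix n n ℝ)ᵀ i ⬝ᵥ (A *ᵥ x)
    = hA.eigenvalues i * ((hA.eigenvectorUnitary : Matrix n n ℝ)ᵀ i ⬝ᵥ x)
  rw [eigenvectorUnitary_transpose_apply, dotProduct_mulVec, ← mulVec_transpose, hAt,
    mulVec_eigenvectorBasis, smul_dotProduct, smul_eq_mul]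

lemma dotProduct_eigenCoords (x y : n → ℝ) : hA.eigenCoords x ⬝ᵥ hA.eigenCoords y = x ⬝ᵥ y := by
  rw [eigenCoords, eigenCoords, dotProduct_mulVec, ← mulVec_transpose, transpose_transpose,
    mulVec_mulVec, hA.eigenvectorUnitary_mul_transpose, one_mulVec]

lemma eigenCoords_surjective : Function.Surjective hA.eigenCoords := fun w ↦
  ⟨hA.eigenvectorUnitary *ᵥ w, by
    rw [eigenCoords, mulVec_mulVec, hA.transpose_mul_eigenvectorUnitary, one_mulVec]⟩

lemma dotProduct_mulVec_eq_sum (x : n → ℝ) :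
    x ⬝ᵥ (A *ᵥ x) = ∑ i, hA.eigenvalues i * hA.eigenCoords x i ^ 2 := by
  rw [← dotProduct_eigenCoords hA, dotProduct]
  refine sum_congr rfl fun i _ ↦ ?_
  rw [eigenCoords_mulVec]
  ring

lemma dotProduct_self_eq_sum (x : n → ℝ) : x ⬝ᵥ x = ∑ i, hA.eigenCoords x i ^ 2 := by
  rw [← dotProduct_eigenCoords hA, dotProduct]
  simp only [sq]

lemma dotProduct_mulVec_le {L : ℝ} {x : n → ℝ}
    (hx : ∀ i, L < hA.eigenvalues i → hA.eigenCoords x i = 0) :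
    x ⬝ᵥ (A *ᵥ x) ≤ L * (x ⬝ᵥ x) := by
  rw [hA.dotProduct_mulVec_eq_sum, hA.dotProduct_self_eq_sum, mul_sum]
  refine sum_le_sum fun i _ ↦ ?_
  by_cases hi : L < hA.eigenvalues i
  · simp [hx i hi]
  · exact mul_le_mul_of_nonneg_right (not_lt.mp hi) (sq_nonneg _)

lemma le_dotProduct_mulVec {m : ℝ} {x : n → ℝ}
    (hx : ∀ i, hA.eigenvalues i < m → hA.eigenCoords x i = 0) :
    m * (x ⬝ᵥ x) ≤ x ⬝ᵥ (A *ᵥ x) := by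
  rw [hA.dotProduct_mulVec_eq_sum, hA.dotProduct_self_eq_sum, mul_sum]
  refine sum_le_sum fun i _ ↦ ?_
  by_cases hi : hA.eigenvalues i < m
  · simp [hx i hi]
  · exact mul_le_mul_of_nonneg_right (not_lt.mp hi) (sq_nonneg _)

lemma eigenCoords_eq_zero_of_mulVec_eq_smul {c : ℝ} {v : n → ℝ} (hv : A *ᵥ v = c • v) {i : n}
    (hi : hA.eigenvalues i ≠ c) : hA.eigenCoords v i = 0 := by
  have h := hA.eigenCoords_mulVec v i
  rw [hv, eigenCoords, mulVec_smul, ← eigenCoords, Pi.smul_apply, smul_eq_mul] at h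
  exact (mul_eq_zero.mp (by linear_combination h)).resolve_left (sub_ne_zero.mpr hi.symm)

lemma dotProduct_mulVec_le_of_dotProduct_eq_zero {c L : ℝ} {v : n → ℝ} (hv : A *ᵥ v = c • v)
    (hv0 : v ≠ 0) (hLc : L < c) (hcard : #{i | L < hA.eigenvalues i} ≤ 1) {x : n → ℝ}
    (hx : v ⬝ᵥ x = 0) : x ⬝ᵥ (A *ᵥ x) ≤ L * (x ⬝ᵥ x) := by
  obtain ⟨i₀, hi₀⟩ : ∃ i₀, hA.eigenCoords v i₀ ≠ 0 := by
    by_contra! h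
    exact hv0 (dotProduct_self_eq_zero.mp (by rw [hA.dotProduct_self_eq_sum]; simp [h]))
  have hc : hA.eigenvalues i₀ = c :=
    not_not.mp fun h ↦ hi₀ (hA.eigenCoords_eq_zero_of_mulVec_eq_smul hv h)
  have hunique : ∀ i, L < hA.eigenvalues i → i = i₀ := fun i hi ↦
    card_le_one.mp hcard i (by simpa using hi) i₀ (by simpa [hc] using hLc)
  refine hA.dotProduct_mulVec_le fun i hi ↦ ?_
  obtain rfl := hunique i hi
  have hsum : v ⬝ᵥ x = hA.eigenCoords v i * hA.eigenCoords x i := by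
    rw [← hA.dotProduct_eigenCoords, dotProduct]
    refine sum_eq_single i (fun j _ hj ↦ ?_) (by simp)
    rw [hA.eigenCoords_eq_zero_of_mulVec_eq_smul hv fun h ↦ hj (hunique j (h ▸ hLc)), zero_mul]
  exact (mul_eq_zero.mp (hsum ▸ hx)).resolve_left hi₀

lemma exists_dotProduct_eq_zero_le_dotProduct_mulVec {m : ℝ}
    (hcard : 2 ≤ #{i | m ≤ hA.eigenvalues i}) (v : n → ℝ) :
    ∃ x ≠ 0, v ⬝ᵥ x = 0 ∧ m * (x ⬝ᵥ x) ≤ x ⬝ᵥ (A *ᵥ x) := by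
  obtain ⟨i, hi, j, hj, hij⟩ := one_lt_card.mp hcard
  simp only [mem_filter, mem_univ, true_and] at hi hj
  set p := hA.eigenCoords v
  obtain ⟨a, b, hab, hp⟩ : ∃ a b : ℝ, (a ≠ 0 ∨ b ≠ 0) ∧ a * p i + b * p j = 0 := by
    by_cases hpi : p i = 0
    · exact ⟨1, 0, by simp, by simp [hpi]⟩
    · exact ⟨p j, -p i, Or.inr (neg_ne_zero.mpr hpi), by ring⟩
  obtain ⟨x, hx⟩ := hA.eigenCoords_surjective (Pi.single i a + Pi.single j b)
  have hxi : hA.eigenCoords x i = a := by simp [hx, hij.symm]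
  have hxj : hA.eigenCoords x j = b := by simp [hx, hij]
  refine ⟨x, ?_, ?_, hA.le_dotProduct_mulVec fun k hk ↦ ?_⟩
  · rintro rfl
    rcases hab with h | h
    · exact h (by simpa [eigenCoords] using hxi.symm)
    · exact h (by simpa [eigenCoords] using hxj.symm)
  · rw [← hA.dotProduct_eigenCoords, hx, dotProduct_add, dotProduct_single, dotProduct_single]
    linear_combination hp
  · have hki : k ≠ i := by rintro rfl; linarith
    have hkj : k ≠ j := by rintro rfl; linarith
    simp [hx, hki, hkj]

lemma card_filter_eigenvalues_eq {f : n → ℝ} (hf : A.charpoly.roots = univ.val.map f)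
    (p : ℝ → Prop) [DecidablePred p] : #{i | p (hA.eigenvalues i)} = #{i | p (f i)} := by
  have h := congrArg (Multiset.countP p) (hA.roots_charpoly_eq_eigenvalues.symm.trans hf)
  simp only [Multiset.countP_map] at h
  exact h

end Matrix.IsHermitian

lemma Antitone.card_filter_lt_le {α : Type*} [Preorder α] {m : ℕ} {f : Fin m → α}
    (hf : Antitone f) (j : Fin m) : #{i | f j < f i} ≤ j := by
  calc #{i | f j < f i} ≤ #(Iio j) :=
        card_le_card fun i hi ↦ mem_Iio.mpr (hf.reflect_lt (mem_filter.mp hi).2)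
    _ = j := Fin.card_Iio j

lemma Antitone.le_card_filter_le {α : Type*} [Preorder α] {m : ℕ} {f : Fin m → α}
    (hf : Antitone f) (j : Fin m) : j + 1 ≤ #{i | f j ≤ f i} := by
  calc (j : ℕ) + 1 = #(Iic j) := (Fin.card_Iic j).symm
    _ ≤ #{i | f j ≤ f i} := card_le_card fun i hi ↦ by simpa using hf (mem_Iic.mp hi)

lemma Matrix.neg_dotProduct_self_le_dotProduct_permMatrix_mulVec {n : Type*} [Fintype n]
    [DecidableEq n] (σ : Equiv.Perm n) (x : n → ℝ) :
    -(x ⬝ᵥ x) ≤ x ⬝ᵥ (σ.permMatrix ℝ *ᵥ x) := by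
  have h := dotProduct_self_star_nonneg (x + x ∘ σ)
  simp only [star_trivial, add_dotProduct, dotProduct_add, comp_equiv_dotProduct_comp_equiv,
    dotProduct_comm (x ∘ σ) x] at h
  rw [permMatrix_mulVec]
  linarith

lemma exists_perm_mem_iff_of_existsUnique {V : Type*} {F : Set (Sym2 V)}
    (hF : ∀ v, ∃! e, e ∈ F ∧ v ∈ e) : ∃ σ : Equiv.Perm V, ∀ v w, s(v, w) ∈ F ↔ σ v = w := by
  have hpartner : ∀ v, ∃! w, s(v, w) ∈ F := fun v ↦ by
    obtain ⟨e, ⟨heF, hve⟩, he⟩ := hF v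
    obtain ⟨w, rfl⟩ := Sym2.mem_iff_exists.mp hve
    refine ⟨w, heF, fun w' hw' ↦ Sym2.congr_right.mp (he _ ⟨hw', Sym2.mem_mk_left v w'⟩)⟩
  choose σ hσF hσ using hpartner
  have hσiff : ∀ v w, s(v, w) ∈ F ↔ σ v = w := fun v w ↦
    ⟨fun h ↦ (hσ v w h).symm, by rintro rfl; exact hσF v⟩
  have hinv : Function.Involutive σ := fun v ↦ (hσiff _ _).mp (Sym2.eq_swap ▸ hσF v)
  exact ⟨hinv.toPerm σ, hσiff⟩

lemma SimpleGraph.adjMatrix_eq_adjMatrix_deleteEdges_add_permMatrix {V : Type*} [Fintype V]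
    [DecidableEq V] (G : SimpleGraph V) {F : Set (Sym2 V)} (hFE : F ⊆ G.edgeSet)
    {σ : Equiv.Perm V} (hσ : ∀ v w, s(v, w) ∈ F ↔ σ v = w) (R : Type*) [NonAssocSemiring R] :
    G.adjMatrix R = (G.deleteEdges F).adjMatrix R + σ.permMatrix R := by
  ext v w
  by_cases hvw : σ v = w
  · have hF : s(v, w) ∈ F := (hσ v w).mpr hvw
    simp [hvw, hF, G.mem_edgeSet.mp (hFE hF)]
  · simp [hvw, (hσ v w).not.mpr hvw]

lemma Real.two_mul_sqrt_sub_one_lt {k : ℝ} (hk : 2 < k) : 2 * √(k - 1) < k := by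
  have hsq := Real.sq_sqrt (by linarith : (0 : ℝ) ≤ k - 1)
  have hne : √(k - 1) ≠ 1 := fun h ↦ by rw [h] at hsq; linarith
  nlinarith [sq_pos_of_ne_zero (sub_ne_zero.mpr hne)]

/-- Let `k ≥ 3`, let `X` be a finite simple `k`-regular graph on `n`
vertices whose second largest adjacency eigenvalue satisfies `λ₁(X) ≤ 2√(k-1)`, and let `F`
be a perfect matching of `X`.  Then the `(k-1)`-regular graph `X - F` obtained by deleting
the edges of `F` satisfies `λ₁(X - F) ≤ 1 + 2√(k-1)`.  Here `λ₀ ≥ λ₁ ≥ ⋯` are the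
eigenvalues in decreasing order with multiplicity (the roots of the characteristic
polynomial of the adjacency matrix). -/
theorem expander_from_deleting_perfect_matching
    (n k : ℕ) (hk : 3 ≤ k) (hn : 1 < n)
    (X : SimpleGraph (Fin n))
    (hreg : X.IsRegularOfDegree k)
    (F : Set (Sym2 (Fin n))) (hFE : F ⊆ X.edgeSet)
    (hF : ∀ v : Fin n, ∃! e, e ∈ F ∧ v ∈ e)
    (lam mu : Fin n → ℝ) (hlam : Antitone lam) (hmu : Antitone mu)
    (hlam' : (SimpleGraph.adjMatrix ℝ X).charpoly.roots = Finset.univ.val.map lam)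
    (hmu' : (SimpleGraph.adjMatrix ℝ (X.deleteEdges F)).charpoly.roots
        = Finset.univ.val.map mu)
    (hgap : lam ⟨1, hn⟩ ≤ 2 * Real.sqrt ((k : ℝ) - 1)) :
    mu ⟨1, hn⟩ ≤ 1 + 2 * Real.sqrt ((k : ℝ) - 1) := by
  set L := lam ⟨1, hn⟩
  set m := mu ⟨1, hn⟩
  have hA := X.isHermitian_adjMatrix ℝ
  have hB := (X.deleteEdges F).isHermitian_adjMatrix ℝ
  have hcardA : #{i | L < hA.eigenvalues i} ≤ 1 := by
    rw [hA.card_filter_eigenvalues_eq hlam']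
    exact hlam.card_filter_lt_le ⟨1, hn⟩
  have hcardB : 2 ≤ #{i | m ≤ hB.eigenvalues i} := by
    rw [hB.card_filter_eigenvalues_eq hmu']
    exact hmu.le_card_filter_le ⟨1, hn⟩
  have hones : X.adjMatrix ℝ *ᵥ (fun _ ↦ 1) = (k : ℝ) • fun _ ↦ 1 := by
    ext v
    simpa using X.adjMatrix_mulVec_const_apply_of_regular (a := (1 : ℝ)) hreg (v := v)
  have hones_ne : (fun _ ↦ 1 : Fin n → ℝ) ≠ 0 := fun h ↦ by simpa using congrFun h ⟨0, by omega⟩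
  have hLk : L < k := hgap.trans_lt (Real.two_mul_sqrt_sub_one_lt (by exact_mod_cast hk))
  obtain ⟨σ, hσ⟩ := exists_perm_mem_iff_of_existsUnique hF
  have hAB := X.adjMatrix_eq_adjMatrix_deleteEdges_add_permMatrix hFE hσ ℝ
  obtain ⟨x, hx0, hx1, hmx⟩ := hB.exists_dotProduct_eq_zero_le_dotProduct_mulVec hcardB fun _ ↦ 1
  have hAx := hA.dotProduct_mulVec_le_of_dotProduct_eq_zero hones hones_ne hLk hcardA hx1
  have hxx : 0 < x ⬝ᵥ x := by simpa using dotProduct_self_star_pos_iff.mpr hx0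
  have hmL : m * (x ⬝ᵥ x) ≤ (L + 1) * (x ⬝ᵥ x) :=
    calc m * (x ⬝ᵥ x) ≤ x ⬝ᵥ ((X.deleteEdges F).adjMatrix ℝ *ᵥ x) := hmx
      _ ≤ x ⬝ᵥ (X.adjMatrix ℝ *ᵥ x) + x ⬝ᵥ x := by
        rw [hAB, add_mulVec, dotProduct_add]
        linarith [neg_dotProduct_self_le_dotProduct_permMatrix_mulVec σ x]
      _ ≤ (L + 1) * (x ⬝ᵥ x) := by linarith
  linarith [le_of_mul_le_mul_right hmL hxx]
end
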